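/- arXiv:2303.10626 — 4 statements merged into one kernel-verified Lean document; each statement's English description precedes it below -/
import Mathlib

section
/- Let v(t), u(t) solve the ODE system v' = -u - v², u' = v(1 - u) on an interval where the solution exists. Then the quantity (v² + 2u - 1)/(u - 1)² is constant along any solution with u(t) ≠ 1. -/
/-!
With `N = v² + 2u - 1` and `D = (u - 1)²`, the system gives `N' = -2v N` and `D' = -2v D`:
numerator and denominator are rescaled by the same factor along a solution, so their
ratio has zero derivative wherever `D ≠ 0`, and is therefore constant on the (convex)
interval of existence.
-/

theorem Convex.is_const_of_hasDerivAt_eq_zero {s : Set ℝ} (hs : Convex ℝ s) {f : ℝ → ℝ}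
    (hf : ∀ t ∈ s, HasDerivAt f 0 t) {x y : ℝ} (hx : x ∈ s) (hy : y ∈ s) : f x = f y := by
  have h := hs.norm_image_sub_le_of_norm_hasDerivWithin_le (C := 0)
    (fun t ht => (hf t ht).hasDerivWithinAt) (fun _ _ => by simp) hy hx
  rwa [zero_mul, norm_le_zero_iff, sub_eq_zero] at h

theorem HasDerivAt.div_eq_zero_of_proportional {𝕜 : Type*} [NontriviallyNormedField 𝕜]
    {f g : 𝕜 → 𝕜} {c x : 𝕜} (hf : HasDerivAt f (c * f x) x) (hg : HasDerivAt g (c * g x) x)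
    (hgx : g x ≠ 0) : HasDerivAt (fun y => f y / g y) 0 x :=
  (hf.div hg hgx).congr_deriv (by ring)

section FirstIntegral

variable {v u : ℝ → ℝ} {t : ℝ}

theorem hasDerivAt_sq_add_two_mul_sub_one (hv : HasDerivAt v (-u t - v t ^ 2) t)
    (hu : HasDerivAt u (v t * (1 - u t)) t) :
    HasDerivAt (fun s => v s ^ 2 + 2 * u s - 1) (-2 * v t * (v t ^ 2 + 2 * u t - 1)) t :=
  (((hv.pow 2).add (hu.const_mul 2)).sub_const 1).congr_deriv (by ring)

theorem hasDerivAt_sub_one_sq (hu : HasDerivAt u (v t * (1 - u t)) t) :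
    HasDerivAt (fun s => (u s - 1) ^ 2) (-2 * v t * (u t - 1) ^ 2) t :=
  ((hu.sub_const 1).pow 2).congr_deriv (by ring)

theorem hasDerivAt_firstIntegral (hv : HasDerivAt v (-u t - v t ^ 2) t)
    (hu : HasDerivAt u (v t * (1 - u t)) t) (hu1 : u t ≠ 1) :
    HasDerivAt (fun s => (v s ^ 2 + 2 * u s - 1) / (u s - 1) ^ 2) 0 t :=
  (hasDerivAt_sq_add_two_mul_sub_one hv hu).div_eq_zero_of_proportional (hasDerivAt_sub_one_sq hu)
    (pow_ne_zero 2 (sub_ne_zero.mpr hu1))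

end FirstIntegral

/-- Along any solution of `v' = -u - v²`, `u' = v(1 - u)` with `u ≠ 1`,
the quantity `(v² + 2u - 1)/(u - 1)²` is constant. -/
theorem stmt_0 (J : Set ℝ) (hJ : Convex ℝ J) (v u : ℝ → ℝ)
    (hv : ∀ t ∈ J, HasDerivAt v (-u t - (v t) ^ 2) t)
    (hu : ∀ t ∈ J, HasDerivAt u (v t * (1 - u t)) t)
    (hu1 : ∀ t ∈ J, u t ≠ 1) :
    ∀ s ∈ J, ∀ t ∈ J,
      ((v s) ^ 2 + 2 * u s - 1) / (u s - 1) ^ 2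
        = ((v t) ^ 2 + 2 * u t - 1) / (u t - 1) ^ 2 := fun _ hs _ ht =>
  hJ.is_const_of_hasDerivAt_eq_zero
    (fun t ht => hasDerivAt_firstIntegral (hv t ht) (hu t ht) (hu1 t ht)) hs ht
end

section
/- Consider the ODE system v' = -u - v², u' = v(1 - u) with initial data (v₀, u₀). If v₀² + 2u₀ - 1 < 0, then the solution exists globally in time and remains bounded. Moreover the solution is periodic with period 2π. -/
/-!
The substitution `u = a / (c + a)`, `v = b / (c + a)` turns the system into the rotation
`a' = b`, `b' = -a`, for every constant `c`. Taking `c = 1 - u₀` and starting the rotation at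
`(u₀, v₀)`, the point `(a, b)` stays on the circle of radius `√(u₀² + v₀²)`, and
`(1 - u₀)² - (u₀² + v₀²) = -(v₀² + 2u₀ - 1) > 0` says that this circle lies in the
half-plane `c + a > 0`. So the denominator is bounded away from zero and the solution is global,
bounded and `2π`-periodic.
-/

open Real

section Linearization

variable {a b : ℝ → ℝ} {c t : ℝ}

theorem hasDerivAt_div_rotation_fst (ha : HasDerivAt a (b t) t) (hb : HasDerivAt b (-a t) t)
    (hd : c + a t ≠ 0) :
    HasDerivAt (fun s => b s / (c + a s)) (-(a t / (c + a t)) - (b t / (c + a t)) ^ 2) t := by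
  refine (hb.div (ha.const_add c) hd).congr_deriv ?_
  field_simp

theorem hasDerivAt_div_rotation_snd (ha : HasDerivAt a (b t) t) (hd : c + a t ≠ 0) :
    HasDerivAt (fun s => a s / (c + a s)) (b t / (c + a t) * (1 - a t / (c + a t))) t := by
  refine (ha.div (ha.const_add c) hd).congr_deriv ?_
  field_simp

end Linearization

theorem abs_div_add_le {x y r c : ℝ} (hx : |x| ≤ r) (hy : |y| ≤ r) (hrc : r < c) :
    |x / (c + y)| ≤ r / (c - r) := by
  have hden : c - r ≤ c + y := by linarith [neg_abs_le y]
  rw [abs_div, abs_of_pos (show 0 < c + y by linarith)]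
  exact div_le_div₀ ((abs_nonneg x).trans hx) hx (by linarith) hden

section Rotation

variable (u₀ v₀ : ℝ)

noncomputable def rotFst (t : ℝ) : ℝ := u₀ * cos t + v₀ * sin t

noncomputable def rotSnd (t : ℝ) : ℝ := v₀ * cos t - u₀ * sin t

@[simp] theorem rotFst_zero : rotFst u₀ v₀ 0 = u₀ := by simp [rotFst]

@[simp] theorem rotSnd_zero : rotSnd u₀ v₀ 0 = v₀ := by simp [rotSnd]

theorem hasDerivAt_rotFst (t : ℝ) : HasDerivAt (rotFst u₀ v₀) (rotSnd u₀ v₀ t) t := by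
  refine (((hasDerivAt_cos t).const_mul u₀).add
    ((hasDerivAt_sin t).const_mul v₀)).congr_deriv ?_
  simp only [rotSnd]
  ring

theorem hasDerivAt_rotSnd (t : ℝ) : HasDerivAt (rotSnd u₀ v₀) (-rotFst u₀ v₀ t) t := by
  refine (((hasDerivAt_cos t).const_mul v₀).sub
    ((hasDerivAt_sin t).const_mul u₀)).congr_deriv ?_
  simp only [rotFst]
  ring

theorem rotFst_sq_add_rotSnd_sq (t : ℝ) :
    rotFst u₀ v₀ t ^ 2 + rotSnd u₀ v₀ t ^ 2 = u₀ ^ 2 + v₀ ^ 2 := by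
  simp only [rotFst, rotSnd]
  linear_combination (u₀ ^ 2 + v₀ ^ 2) * sin_sq_add_cos_sq t

theorem abs_rotFst_le (t : ℝ) : |rotFst u₀ v₀ t| ≤ √(u₀ ^ 2 + v₀ ^ 2) :=
  abs_le_sqrt (by nlinarith [rotFst_sq_add_rotSnd_sq u₀ v₀ t, sq_nonneg (rotSnd u₀ v₀ t)])

theorem abs_rotSnd_le (t : ℝ) : |rotSnd u₀ v₀ t| ≤ √(u₀ ^ 2 + v₀ ^ 2) :=
  abs_le_sqrt (by nlinarith [rotFst_sq_add_rotSnd_sq u₀ v₀ t, sq_nonneg (rotFst u₀ v₀ t)])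

theorem rotFst_periodic : Function.Periodic (rotFst u₀ v₀) (2 * π) := by
  intro t
  simp [rotFst, cos_add_two_pi, sin_add_two_pi]

theorem rotSnd_periodic : Function.Periodic (rotSnd u₀ v₀) (2 * π) := by
  intro t
  simp [rotSnd, cos_add_two_pi, sin_add_two_pi]

end Rotation

/-- If `v₀² + 2u₀ - 1 < 0`, the solution of `v' = -u - v²`, `u' = v(1 - u)` with
data `(v₀, u₀)` exists globally, is bounded, and is `2π`-periodic. -/
theorem stmt_3 (v₀ u₀ : ℝ) (h : v₀ ^ 2 + 2 * u₀ - 1 < 0) :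
    ∃ v u : ℝ → ℝ,
      (∀ t, HasDerivAt v (-u t - (v t) ^ 2) t)
      ∧ (∀ t, HasDerivAt u (v t * (1 - u t)) t)
      ∧ v 0 = v₀ ∧ u 0 = u₀
      ∧ (∃ M : ℝ, ∀ t, |v t| ≤ M ∧ |u t| ≤ M)
      ∧ (∀ t, v (t + 2 * π) = v t ∧ u (t + 2 * π) = u t) := by
  set a := rotFst u₀ v₀
  set b := rotSnd u₀ v₀
  set r := √(u₀ ^ 2 + v₀ ^ 2)
  have hr : r < 1 - u₀ := (sqrt_lt' (by nlinarith)).2 (by nlinarith)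
  have hd : ∀ t, 1 - u₀ + a t ≠ 0 := fun t => by
    linarith [neg_abs_le (a t), abs_rotFst_le u₀ v₀ t]
  refine ⟨fun t => b t / (1 - u₀ + a t), fun t => a t / (1 - u₀ + a t),
    fun t => ?_, fun t => ?_, by simp [a, b], by simp [a],
    ⟨r / (1 - u₀ - r), fun t => ⟨?_, ?_⟩⟩, fun t => ?_⟩
  · exact hasDerivAt_div_rotation_fst (hasDerivAt_rotFst ..) (hasDerivAt_rotSnd ..) (hd t)
  · exact hasDerivAt_div_rotation_snd (hasDerivAt_rotFst ..) (hd t)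
  · exact abs_div_add_le (abs_rotSnd_le ..) (abs_rotFst_le ..) hr
  · exact abs_div_add_le (abs_rotFst_le ..) (abs_rotFst_le ..) hr
  · simp only [a, b, rotFst_periodic u₀ v₀ t, rotSnd_periodic u₀ v₀ t, and_self]
end

section
/- Let w, μ, S₀ > 0. Every solution (ℰ(ξ), 𝒱(ξ)) of the ODE system ℰ' = -S₀𝒱/(𝒱 - w), 𝒱' = ℰ(𝒱 - w)²/((𝒱 - w)³ + μ w S₀), defined on an interval where 𝒱 ≠ w and (𝒱 - w)³ + μ w S₀ ≠ 0, conserves the quantity Ψ(ℰ, 𝒱) = ℰ² + S₀𝒱² - w μ S₀² (2𝒱 - w)/(𝒱 - w)². -/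
/-!
Along the flow, `(ℰ', 𝒱')` is the Hamiltonian vector field `(-∂Ψ/∂𝒱, ∂Ψ/∂ℰ)` of `Ψ` rescaled by
the factor `(𝒱 - w)² / (2((𝒱 - w)³ + μwS₀))`, since
`∂Ψ/∂ℰ = 2ℰ` and `∂Ψ/∂𝒱 = 2S₀𝒱((𝒱 - w)³ + μwS₀)/(𝒱 - w)³`.
Hence `Ψ(ℰ, 𝒱)` has zero derivative along a solution, and is constant on the convex set `J`.
-/

theorem Convex.eq_of_hasDerivWithinAt_zero {G : Type*} [NormedAddCommGroup G] [NormedSpace ℝ G]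
    {f : ℝ → G} {s : Set ℝ} (hs : Convex ℝ s) (hf : ∀ x ∈ s, HasDerivWithinAt f 0 s x)
    {x y : ℝ} (hx : x ∈ s) (hy : y ∈ s) : f x = f y := by
  have h := hs.norm_image_sub_le_of_norm_hasDerivWithin_le hf (C := 0) (by simp) hx hy
  rw [zero_mul, norm_le_zero_iff, sub_eq_zero] at h
  exact h.symm

/-- The quantity `Ψ(ℰ, 𝒱)`. -/
noncomputable def travelingWaveEnergy (w μ S₀ e v : ℝ) : ℝ :=
  e ^ 2 + S₀ * v ^ 2 - w * μ * S₀ ^ 2 * (2 * v - w) / (v - w) ^ 2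

theorem HasDerivAt.travelingWaveEnergy {w μ S₀ e' v' ξ : ℝ} {E V : ℝ → ℝ}
    (hE : HasDerivAt E e' ξ) (hV : HasDerivAt V v' ξ) (hVw : V ξ ≠ w) :
    HasDerivAt (fun t => travelingWaveEnergy w μ S₀ (E t) (V t))
      (2 * E ξ * e' + 2 * S₀ * V ξ * ((V ξ - w) ^ 3 + μ * w * S₀) / (V ξ - w) ^ 3 * v') ξ := by
  have hVw' : V ξ - w ≠ 0 := sub_ne_zero.mpr hVw
  have hsq : (V ξ - w) ^ 2 ≠ 0 := pow_ne_zero 2 hVw'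
  have h := ((hE.pow 2).add ((hV.pow 2).const_mul S₀)).sub
    ((((hV.const_mul 2).sub_const w).const_mul (w * μ * S₀ ^ 2)).div ((hV.sub_const w).pow 2) hsq)
  refine h.congr_deriv ?_
  simp only [Pi.pow_apply, Nat.cast_ofNat]
  field_simp
  ring

theorem stmt_10_general (w μ S₀ : ℝ)
    (J : Set ℝ) (hJ : Convex ℝ J) (E V : ℝ → ℝ)
    (hne : ∀ ξ ∈ J, V ξ ≠ w)
    (hden : ∀ ξ ∈ J, (V ξ - w) ^ 3 + μ * w * S₀ ≠ 0)
    (hE : ∀ ξ ∈ J, HasDerivAt E (-(S₀ * V ξ) / (V ξ - w)) ξ)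
    (hV : ∀ ξ ∈ J, HasDerivAt V
      (E ξ * (V ξ - w) ^ 2 / ((V ξ - w) ^ 3 + μ * w * S₀)) ξ) :
    ∀ a ∈ J, ∀ b ∈ J,
      (E a) ^ 2 + S₀ * (V a) ^ 2 - w * μ * S₀ ^ 2 * (2 * V a - w) / (V a - w) ^ 2
        = (E b) ^ 2 + S₀ * (V b) ^ 2
            - w * μ * S₀ ^ 2 * (2 * V b - w) / (V b - w) ^ 2 := by
  intro a ha b hb
  refine hJ.eq_of_hasDerivWithinAt_zero (f := fun t => travelingWaveEnergy w μ S₀ (E t) (V t))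
    (fun ξ hξ => ?_) ha hb
  have hflow := (hE ξ hξ).travelingWaveEnergy (μ := μ) (S₀ := S₀) (hV ξ hξ) (hne ξ hξ)
  convert hflow.hasDerivWithinAt using 1
  have hVw : V ξ - w ≠ 0 := sub_ne_zero.mpr (hne ξ hξ)
  have hd := hden ξ hξ
  generalize (V ξ - w) ^ 3 + μ * w * S₀ = q at hd ⊢
  generalize V ξ - w = u at hVw ⊢
  field_simp
  ring

/-- The traveling-wave system for the blood flow model conserves
`Ψ(ℰ,𝒱) = ℰ² + S₀𝒱² - wμS₀²(2𝒱 - w)/(𝒱 - w)²`. -/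
theorem stmt_10 (w μ S₀ : ℝ) (hw : 0 < w) (hμ : 0 < μ) (hS : 0 < S₀)
    (J : Set ℝ) (hJ : Convex ℝ J) (E V : ℝ → ℝ)
    (hne : ∀ ξ ∈ J, V ξ ≠ w)
    (hden : ∀ ξ ∈ J, (V ξ - w) ^ 3 + μ * w * S₀ ≠ 0)
    (hE : ∀ ξ ∈ J, HasDerivAt E (-(S₀ * V ξ) / (V ξ - w)) ξ)
    (hV : ∀ ξ ∈ J, HasDerivAt V
      (E ξ * (V ξ - w) ^ 2 / ((V ξ - w) ^ 3 + μ * w * S₀)) ξ) :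
    ∀ a ∈ J, ∀ b ∈ J,
      (E a) ^ 2 + S₀ * (V a) ^ 2 - w * μ * S₀ ^ 2 * (2 * V a - w) / (V a - w) ^ 2
        = (E b) ^ 2 + S₀ * (V b) ^ 2
            - w * μ * S₀ ^ 2 * (2 * V b - w) / (V b - w) ^ 2 :=
  stmt_10_general w μ S₀ J hJ E V hne hden hE hV
end

section
/- For n = 2 and Q = [[0,-1],[1,0]], let (q, u₁, u₂) solve q' = u₁, u₁' = -u₂, u₂' = u₁ with q(0)=1, u₁(0)=a, u₂(0)=b. Then q(t) = 1 + a sin t + b(cos t - 1), and q(t) > 0 for all t > 0 if and only if a² + 2b - 1 < 0 or (a, b) = (0, 0). -/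
open Real

/-- For the Radon linearization of the cold plasma derivative dynamics:
`q' = u₁`, `u₁' = -u₂`, `u₂' = u₁` with `q(0)=1`, `u₁(0)=a`, `u₂(0)=b`, one has
`q(t) = 1 + a sin t + b(cos t - 1)`, and `q(t) > 0` for all `t > 0` iff
`a² + 2b - 1 < 0` or `(a,b) = (0,0)`. -/
theorem stmt_15 (a b : ℝ) (q u₁ u₂ : ℝ → ℝ)
    (hq : ∀ t, HasDerivAt q (u₁ t) t)
    (hu₁ : ∀ t, HasDerivAt u₁ (-u₂ t) t)
    (hu₂ : ∀ t, HasDerivAt u₂ (u₁ t) t)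
    (hq0 : q 0 = 1) (hu₁0 : u₁ 0 = a) (hu₂0 : u₂ 0 = b) :
    (∀ t, q t = 1 + a * Real.sin t + b * (Real.cos t - 1))
    ∧ ((∀ t > 0, q t > 0) ↔ (a ^ 2 + 2 * b - 1 < 0 ∨ (a = 0 ∧ b = 0))) := by
  -- Energy function
  set E : ℝ → ℝ := fun t =>
    (u₁ t - (a * Real.cos t - b * Real.sin t)) ^ 2
      + (u₂ t - (a * Real.sin t + b * Real.cos t)) ^ 2 with hE
  have hEderiv : ∀ t, HasDerivAt E 0 t := by
    intro t
    have h1 : HasDerivAt (fun t => u₁ t - (a * Real.cos t - b * Real.sin t))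
        (-u₂ t - (a * (-Real.sin t) - b * Real.cos t)) t :=
      (hu₁ t).sub (((Real.hasDerivAt_cos t).const_mul a).sub
        ((Real.hasDerivAt_sin t).const_mul b))
    have h2 : HasDerivAt (fun t => u₂ t - (a * Real.sin t + b * Real.cos t))
        (u₁ t - (a * Real.cos t + b * (-Real.sin t))) t :=
      (hu₂ t).sub (((Real.hasDerivAt_sin t).const_mul a).add
        ((Real.hasDerivAt_cos t).const_mul b))
    have h3 := (h1.pow 2).add (h2.pow 2)
    refine h3.congr_deriv ?_
    push_cast
    ring
  have hEconst : ∀ t, E t = E 0 := by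
    intro t
    apply is_const_of_deriv_eq_zero (f := E)
    · intro x; exact (hEderiv x).differentiableAt
    · intro x; exact (hEderiv x).deriv
  have hE0 : E 0 = 0 := by
    simp [hE, hu₁0, hu₂0]
  have hu₁eq : ∀ t, u₁ t = a * Real.cos t - b * Real.sin t := by
    intro t
    have h := (hEconst t).trans hE0
    have h' : (u₁ t - (a * Real.cos t - b * Real.sin t)) ^ 2
        + (u₂ t - (a * Real.sin t + b * Real.cos t)) ^ 2 = 0 := h
    have h1 : (u₁ t - (a * Real.cos t - b * Real.sin t)) ^ 2 = 0 := by
      nlinarith [sq_nonneg (u₁ t - (a * Real.cos t - b * Real.sin t)),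
        sq_nonneg (u₂ t - (a * Real.sin t + b * Real.cos t))]
    have := pow_eq_zero_iff (n := 2) (by norm_num) |>.mp h1
    linarith [sub_eq_zero.mp this]
  have hqform : ∀ t, q t = 1 + a * Real.sin t + b * (Real.cos t - 1) := by
    intro t
    have hD : ∀ s, HasDerivAt
        (fun s => q s - (1 + a * Real.sin s + b * (Real.cos s - 1))) 0 s := by
      intro s
      have hg : HasDerivAt (fun s => 1 + a * Real.sin s + b * (Real.cos s - 1))
          (a * Real.cos s + b * (-Real.sin s)) s := by
        have := ((Real.hasDerivAt_sin s).const_mul a).const_add 1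
        have h2 := ((Real.hasDerivAt_cos s).sub_const 1).const_mul b
        exact (this.add h2).congr_deriv (by ring)
      have := (hq s).sub hg
      exact this.congr_deriv (by rw [hu₁eq s]; ring)
    have hc : ∀ t, (fun s => q s - (1 + a * Real.sin s + b * (Real.cos s - 1))) t
        = (fun s => q s - (1 + a * Real.sin s + b * (Real.cos s - 1))) 0 := by
      intro t
      exact is_const_of_deriv_eq_zero (fun x => (hD x).differentiableAt)
        (fun x => (hD x).deriv) t 0
    have := hc t
    simp only [hq0] at this
    simp at this
    linarith
  refine ⟨hqform, ?_⟩
  constructor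
  · -- forward: positivity implies condition
    intro hpos
    by_contra hcon
    push_neg at hcon
    obtain ⟨h1, h2⟩ := hcon
    have hr2 : 0 < a ^ 2 + b ^ 2 := by
      rcases eq_or_lt_of_le (by positivity : (0:ℝ) ≤ a ^ 2 + b ^ 2) with heq | hlt
      · exfalso
        have ha : a = 0 := by nlinarith [sq_nonneg a, sq_nonneg b]
        have hb : b = 0 := by nlinarith [sq_nonneg a, sq_nonneg b]
        exact absurd (h2 ha hb) (by nlinarith)
      · exact hlt
    set r := Real.sqrt (a ^ 2 + b ^ 2) with hr
    have hrpos : 0 < r := Real.sqrt_pos.mpr hr2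
    have hrsq : r ^ 2 = a ^ 2 + b ^ 2 := Real.sq_sqrt hr2.le
    -- find angle θ with cos θ = -b/r, sin θ = -a/r
    set z : ℂ := ⟨-b, -a⟩ with hz
    have hzne : z ≠ 0 := by
      intro h
      rw [Complex.ext_iff] at h
      simp [hz] at h
      nlinarith [h.1, h.2]
    have habs : ‖z‖ = r := by
      rw [Complex.norm_def, Complex.normSq_mk, hr]
      ring_nf
    have hcos : Real.cos z.arg = -b / r := by
      rw [Complex.cos_arg hzne, habs]
    have hsin : Real.sin z.arg = -a / r := by
      rw [Complex.sin_arg, habs]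
    set t := z.arg + 2 * Real.pi with ht
    have htpos : 0 < t := by
      have := (Complex.arg_mem_Ioc z).1
      have hπ := Real.pi_pos
      simp only [ht]; linarith
    have hq_t : q t = 1 - b + (a * (-a / r) + b * (-b / r)) := by
      rw [hqform t, ht, Real.sin_add_two_pi, Real.cos_add_two_pi, hsin, hcos]
      ring
    have hsum : a * (-a / r) + b * (-b / r) = -r := by
      field_simp
      nlinarith [hrsq]
    have hrge : 1 - b ≤ r := by
      have h3 : (1 - b) ^ 2 ≤ a ^ 2 + b ^ 2 := by nlinarith
      calc 1 - b ≤ |1 - b| := le_abs_self _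
        _ = Real.sqrt ((1 - b) ^ 2) := (Real.sqrt_sq_eq_abs _).symm
        _ ≤ r := Real.sqrt_le_sqrt h3
    have : q t ≤ 0 := by rw [hq_t, hsum]; linarith
    exact absurd (hpos t htpos) (by linarith)
  · -- backward
    rintro (hlt | ⟨ha, hb⟩) t ht
    · rw [hqform t]
      have hsc := Real.sin_sq_add_cos_sq t
      have hX : (a * Real.sin t + b * Real.cos t) ^ 2 ≤ a ^ 2 + b ^ 2 := by
        nlinarith [sq_nonneg (a * Real.cos t - b * Real.sin t)]
      have hb1 : b < 1 / 2 := by nlinarith [sq_nonneg a]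
      nlinarith [hX, hb1, sq_nonneg (1 - b + a * Real.sin t + b * Real.cos t)]
    · rw [hqform t, ha, hb]; norm_num
end
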